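/- arXiv:2101.04928 — 3 statements merged into one kernel-verified Lean document; each statement's English description precedes it below -/
import Mathlib

section
/- (Proposition 1, forward direction.) Fix M ≥ 1 buildings and horizon N ≥ 1. For each i let U_i ⊆ ℝ^{d_i} be a set, f̃_i : ℝ^{d_i} → ℝ a function, a_i : ℝ^{d_i} → ℝ^N a linear map; let ṽ ∈ ℝ^N and v̲, v̄ ∈ ℝ. Consider Problem (P1): minimize Σ_i f̃_i(u_i) over u = (u_1, …, u_M) with u_i ∈ U_i and v̲ ≤ Σ_i a_i(u_i)_k + ṽ_k ≤ v̄ for all k; and Problem (P2): minimize Σ_i f̃_i(u_i) over (u, s) with u_i ∈ U_i, s_i ∈ ℝ^N × ℝ^N, g_i(u_i, s_i) ≤ 0 componentwise, and Σ_i s_i = 0, where g_i(u_i, s_i)_k = ((ṽ_k − v̄)/M + a_i(u_i)_k − s_{i,k}^{(1)}, (v̲ − ṽ_k)/M − a_i(u_i)_k − s_{i,k}^{(2)}). If u* is a minimizer of (P1), then the pair (u*, ŝ) is a minimizer of (P2), where ŝ_{i,k} = (a_i(u*_i)_k − (1/M) Σ_j a_j(u*_j)_k, −a_i(u*_i)_k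 + (1/M) Σ_j a_j(u*_j)_k). -/
open Finset

/-- Feasibility for Problem (P1): local constraints `uᵢ ∈ Uᵢ` plus the coupled
voltage box constraint. -/
def P1Feas (M N : ℕ) (d : Fin M → ℕ)
    (U : ∀ i : Fin M, Set (Fin (d i) → ℝ))
    (a : ∀ i : Fin M, (Fin (d i) → ℝ) →ₗ[ℝ] (Fin N → ℝ))
    (vt : Fin N → ℝ) (vlo vhi : ℝ)
    (u : ∀ i : Fin M, Fin (d i) → ℝ) : Prop :=
  (∀ i, u i ∈ U i) ∧
    ∀ k : Fin N,
      vlo ≤ (∑ i, a i (u i) k) + vt k ∧ (∑ i, a i (u i) k) + vt k ≤ vhi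

/-- Feasibility for Problem (P2): local constraints, the decoupled inequalities
`gᵢ(uᵢ, sᵢ) ≤ 0`, and the consensus constraint `∑ᵢ sᵢ = 0`. -/
def P2Feas (M N : ℕ) (d : Fin M → ℕ)
    (U : ∀ i : Fin M, Set (Fin (d i) → ℝ))
    (a : ∀ i : Fin M, (Fin (d i) → ℝ) →ₗ[ℝ] (Fin N → ℝ))
    (vt : Fin N → ℝ) (vlo vhi : ℝ)
    (u : ∀ i : Fin M, Fin (d i) → ℝ)
    (s : Fin M → (Fin N → ℝ) × (Fin N → ℝ)) : Prop :=
  (∀ i, u i ∈ U i) ∧ (∑ i, s i = 0) ∧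
    ∀ i k, (vt k - vhi) / (M : ℝ) + a i (u i) k - (s i).1 k ≤ 0 ∧
           (vlo - vt k) / (M : ℝ) - a i (u i) k - (s i).2 k ≤ 0

/-- Proposition 1, forward direction: a minimizer `u*` of (P1) together with
the explicit slack assignment `ŝ` is a minimizer of (P2). -/
theorem prop1_forward
    (M N : ℕ) (hM : 1 ≤ M) (hN : 1 ≤ N) (d : Fin M → ℕ)
    (U : ∀ i : Fin M, Set (Fin (d i) → ℝ))
    (f : ∀ i : Fin M, (Fin (d i) → ℝ) → ℝ)
    (a : ∀ i : Fin M, (Fin (d i) → ℝ) →ₗ[ℝ] (Fin N → ℝ))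
    (vt : Fin N → ℝ) (vlo vhi : ℝ)
    (ustar : ∀ i : Fin M, Fin (d i) → ℝ)
    (hfeas : P1Feas M N d U a vt vlo vhi ustar)
    (hmin : ∀ u, P1Feas M N d U a vt vlo vhi u →
      (∑ i, f i (ustar i)) ≤ ∑ i, f i (u i))
    (shat : Fin M → (Fin N → ℝ) × (Fin N → ℝ))
    (hshat : ∀ i, shat i =
      ((fun k => a i (ustar i) k - (1 / (M : ℝ)) * ∑ j, a j (ustar j) k),
       (fun k => -(a i (ustar i) k) + (1 / (M : ℝ)) * ∑ j, a j (ustar j) k))) :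
    P2Feas M N d U a vt vlo vhi ustar shat ∧
      ∀ u s, P2Feas M N d U a vt vlo vhi u s →
        (∑ i, f i (ustar i)) ≤ ∑ i, f i (u i) := by

  have hMpos : (0:ℝ) < (M:ℝ) := by exact_mod_cast Nat.lt_of_lt_of_le Nat.zero_lt_one hM
  obtain ⟨hU, hbox⟩ := hfeas
  constructor
  · refine ⟨hU, ?_, ?_⟩
    · ext k
      · simp only [Prod.fst_sum, Finset.sum_apply, hshat, Prod.fst_zero, Pi.zero_apply]
        rw [Finset.sum_sub_distrib, Finset.sum_const, Finset.card_univ, Fintype.card_fin]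
        rw [nsmul_eq_mul]; field_simp; ring
      · simp only [Prod.snd_sum, Finset.sum_apply, hshat, Prod.snd_zero, Pi.zero_apply]
        rw [Finset.sum_add_distrib, Finset.sum_const, Finset.card_univ, Fintype.card_fin,
          Finset.sum_neg_distrib]
        rw [nsmul_eq_mul]; field_simp; ring
    · intro i k
      have h1 := (hbox k).1
      have h2 := (hbox k).2
      rw [hshat]
      constructor
      · have : (vt k - vhi) / (M:ℝ) + a i (ustar i) k -
            (a i (ustar i) k - (1 / (M:ℝ)) * ∑ j, a j (ustar j) k)
            = ((∑ j, a j (ustar j) k) + vt k - vhi) / (M:ℝ) := by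
          field_simp; ring
        rw [this]
        apply div_nonpos_of_nonpos_of_nonneg _ hMpos.le
        linarith
      · have : (vlo - vt k) / (M:ℝ) - a i (ustar i) k -
            (-(a i (ustar i) k) + (1 / (M:ℝ)) * ∑ j, a j (ustar j) k)
            = (vlo - ((∑ j, a j (ustar j) k) + vt k)) / (M:ℝ) := by
          field_simp; ring
        rw [this]
        apply div_nonpos_of_nonpos_of_nonneg _ hMpos.le
        linarith
  · intro u s ⟨hU', hs0, hg⟩
    apply hmin
    refine ⟨hU', fun k => ?_⟩
    have hs1 : ∑ i, (s i).1 k = 0 := by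
      have := congrArg (fun p => p.1 k) hs0
      simpa [Prod.fst_sum, Finset.sum_apply] using this
    have hs2 : ∑ i, (s i).2 k = 0 := by
      have := congrArg (fun p => p.2 k) hs0
      simpa [Prod.snd_sum, Finset.sum_apply] using this
    have H1 : ∑ i, ((vt k - vhi) / (M:ℝ) + a i (u i) k - (s i).1 k) ≤ 0 :=
      Finset.sum_nonpos fun i _ => (hg i k).1
    have H2 : ∑ i, ((vlo - vt k) / (M:ℝ) - a i (u i) k - (s i).2 k) ≤ 0 :=
      Finset.sum_nonpos fun i _ => (hg i k).2
    rw [Finset.sum_sub_distrib, Finset.sum_add_distrib, Finset.sum_const,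
      Finset.card_univ, Fintype.card_fin, hs1] at H1
    rw [Finset.sum_sub_distrib, Finset.sum_sub_distrib, Finset.sum_const,
      Finset.card_univ, Fintype.card_fin, hs2] at H2
    have hdiv : (M:ℝ) • ((vt k - vhi) / (M:ℝ)) = vt k - vhi := by
      rw [smul_eq_mul]; field_simp
    have hdiv2 : (M:ℝ) • ((vlo - vt k) / (M:ℝ)) = vlo - vt k := by
      rw [smul_eq_mul]; field_simp
    rw [← Nat.cast_smul_eq_nsmul ℝ] at H1 H2
    rw [hdiv] at H1
    rw [hdiv2] at H2
    constructor <;> linarith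
end

section
/- (Proposition 1, reverse direction.) Fix M ≥ 1 buildings and horizon N ≥ 1. For each i let U_i ⊆ ℝ^{d_i} be a set, f̃_i : ℝ^{d_i} → ℝ a function, a_i : ℝ^{d_i} → ℝ^N a linear map; let ṽ ∈ ℝ^N and v̲, v̄ ∈ ℝ. Consider Problem (P1): minimize Σ_i f̃_i(u_i) over u with u_i ∈ U_i and v̲ ≤ Σ_i a_i(u_i)_k + ṽ_k ≤ v̄ for all k; and Problem (P2): minimize Σ_i f̃_i(u_i) over (u, s) with u_i ∈ U_i, s_i ∈ ℝ^N × ℝ^N, g_i(u_i, s_i) ≤ 0 componentwise, and Σ_i s_i = 0, where g_i(u_i, s_i)_k = ((ṽ_k − v̄)/M + a_i(u_i)_k − s_{i,k}^{(1)}, (v̲ − ṽ_k)/M − a_i(u_i)_k − s_{i,k}^{(2)}). If (û, ŝ) is a minimizer of (P2), then û is a minimizer of (P1). -/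
open Finset

/-- Proposition 1, reverse direction: if `(û, ŝ)` is a minimizer of (P2),
then `û` is a minimizer of (P1). -/
theorem prop1_reverse
    (M N : ℕ) (hM : 1 ≤ M) (hN : 1 ≤ N) (d : Fin M → ℕ)
    (U : ∀ i : Fin M, Set (Fin (d i) → ℝ))
    (f : ∀ i : Fin M, (Fin (d i) → ℝ) → ℝ)
    (a : ∀ i : Fin M, (Fin (d i) → ℝ) →ₗ[ℝ] (Fin N → ℝ))
    (vt : Fin N → ℝ) (vlo vhi : ℝ)
    (uhat : ∀ i : Fin M, Fin (d i) → ℝ)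
    (shat : Fin M → (Fin N → ℝ) × (Fin N → ℝ))
    (hfeas : P2Feas M N d U a vt vlo vhi uhat shat)
    (hmin : ∀ u s, P2Feas M N d U a vt vlo vhi u s →
      (∑ i, f i (uhat i)) ≤ ∑ i, f i (u i)) :
    P1Feas M N d U a vt vlo vhi uhat ∧
      ∀ u, P1Feas M N d U a vt vlo vhi u →
        (∑ i, f i (uhat i)) ≤ ∑ i, f i (u i) := by
  obtain ⟨hU, hsum, hg⟩ := hfeas
  have hM0 : (M : ℝ) ≠ 0 := by positivity
  -- sums of shat components vanish
  have hs1 : ∀ k, (∑ i, (shat i).1 k) = 0 := by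
    intro k
    have : (∑ i, shat i).1 k = (0 : (Fin N → ℝ) × (Fin N → ℝ)).1 k := by rw [hsum]
    simpa [Prod.fst_sum] using this
  have hs2 : ∀ k, (∑ i, (shat i).2 k) = 0 := by
    intro k
    have : (∑ i, shat i).2 k = (0 : (Fin N → ℝ) × (Fin N → ℝ)).2 k := by rw [hsum]
    simpa [Prod.snd_sum] using this
  have hfeas1 : P1Feas M N d U a vt vlo vhi uhat := by
    refine ⟨hU, fun k => ?_⟩
    have h1 : (∑ i : Fin M, ((vt k - vhi) / (M : ℝ) + a i (uhat i) k - (shat i).1 k)) ≤ 0 :=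
      Finset.sum_nonpos fun i _ => (hg i k).1
    have h2 : (∑ i : Fin M, ((vlo - vt k) / (M : ℝ) - a i (uhat i) k - (shat i).2 k)) ≤ 0 :=
      Finset.sum_nonpos fun i _ => (hg i k).2
    have hc : (∑ _i : Fin M, (vt k - vhi) / (M : ℝ)) = vt k - vhi := by
      rw [Finset.sum_const, Finset.card_univ, Fintype.card_fin, nsmul_eq_mul]
      field_simp
    have hc' : (∑ _i : Fin M, (vlo - vt k) / (M : ℝ)) = vlo - vt k := by
      rw [Finset.sum_const, Finset.card_univ, Fintype.card_fin, nsmul_eq_mul]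
      field_simp
    constructor
    · have e : (∑ i : Fin M, ((vlo - vt k) / (M : ℝ) - a i (uhat i) k - (shat i).2 k))
          = (vlo - vt k) - (∑ i, a i (uhat i) k) - 0 := by
        rw [Finset.sum_sub_distrib, Finset.sum_sub_distrib, hc', hs2 k]
      linarith [h2, e.symm.trans_le h2]
    · have e : (∑ i : Fin M, ((vt k - vhi) / (M : ℝ) + a i (uhat i) k - (shat i).1 k))
          = (vt k - vhi) + (∑ i, a i (uhat i) k) - 0 := by
        rw [Finset.sum_sub_distrib, Finset.sum_add_distrib, hc, hs1 k]
      linarith [e.symm.trans_le h1]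
  refine ⟨hfeas1, fun u hu => ?_⟩
  obtain ⟨hU', hbox⟩ := hu
  set s : Fin M → (Fin N → ℝ) × (Fin N → ℝ) := fun i =>
    (fun k => a i (u i) k + (vt k - vhi) / (M : ℝ)
        - ((∑ j, a j (u j) k) + vt k - vhi) / (M : ℝ),
     fun k => -(a i (u i) k) + (vlo - vt k) / (M : ℝ)
        - (vlo - vt k - (∑ j, a j (u j) k)) / (M : ℝ)) with hs
  apply hmin u s
  refine ⟨hU', ?_, ?_⟩
  · ext k
    · simp only [Prod.fst_sum, Finset.sum_apply, hs, Prod.fst_zero, Pi.zero_apply]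
      rw [Finset.sum_sub_distrib, Finset.sum_add_distrib, Finset.sum_const,
        Finset.card_univ, Fintype.card_fin, nsmul_eq_mul]
      simp only [Finset.sum_const, Finset.card_univ, Fintype.card_fin, nsmul_eq_mul]
      field_simp
      ring
    · simp only [Prod.snd_sum, Finset.sum_apply, hs, Prod.snd_zero, Pi.zero_apply]
      rw [Finset.sum_sub_distrib, Finset.sum_add_distrib, Finset.sum_const,
        Finset.card_univ, Fintype.card_fin, nsmul_eq_mul]
      simp only [Finset.sum_const, Finset.card_univ, Fintype.card_fin, nsmul_eq_mul,
        Finset.sum_neg_distrib]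
      field_simp
      ring
  · intro i k
    have hb := hbox k
    have hMpos : (0 : ℝ) < M := by positivity
    constructor
    · have : (vt k - vhi) / (M : ℝ) + a i (u i) k - (s i).1 k
          = ((∑ j, a j (u j) k) + vt k - vhi) / (M : ℝ) := by
        simp [hs]; ring
      rw [this]
      apply div_nonpos_of_nonpos_of_nonneg _ hMpos.le
      linarith [hb.2]
    · have : (vlo - vt k) / (M : ℝ) - a i (u i) k - (s i).2 k
          = (vlo - vt k - (∑ j, a j (u j) k)) / (M : ℝ) := by
        simp [hs]; ring
      rw [this]
      apply div_nonpos_of_nonpos_of_nonneg _ hMpos.le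
      linarith [hb.1]
end

section
/- Fix M ≥ 1 buildings and horizon N ≥ 1. For each i let U_i ⊆ ℝ^{d_i} be a set, f̃_i : ℝ^{d_i} → ℝ a function, a_i : ℝ^{d_i} → ℝ^N a linear map; let ṽ ∈ ℝ^N and v̲, v̄ ∈ ℝ. Let (P1) and (P2) be as follows. (P1): minimize Σ_i f̃_i(u_i) over u with u_i ∈ U_i and v̲ ≤ Σ_i a_i(u_i)_k + ṽ_k ≤ v̄ for all k. (P2): minimize Σ_i f̃_i(u_i) over (u, s) with u_i ∈ U_i, s_i ∈ ℝ^N × ℝ^N, g_i(u_i, s_i) ≤ 0 componentwise, and Σ_i s_i = 0, where g_i(u_i, s_i)_k = ((ṽ_k − v̄)/M + a_i(u_i)_k − s_{i,k}^{(1)}, (v̲ − ṽ_k)/M − a_i(u_i)_k − s_{i,k}^{(2)}). Then the infimum of the objective of (P1) over the feasible set of (P1) equals the infimum of the objective of (P2) over the feasible set of (P2); in particular (P1) is feasible if and only if (P2) is feasible. -/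
open Finset

lemma feas_iff_aux (M N : ℕ) (hM : 1 ≤ M) (d : Fin M → ℕ)
    (U : ∀ i : Fin M, Set (Fin (d i) → ℝ))
    (a : ∀ i : Fin M, (Fin (d i) → ℝ) →ₗ[ℝ] (Fin N → ℝ))
    (vt : Fin N → ℝ) (vlo vhi : ℝ)
    (u : ∀ i : Fin M, Fin (d i) → ℝ) :
    P1Feas M N d U a vt vlo vhi u ↔ ∃ s, P2Feas M N d U a vt vlo vhi u s := by
  have hM0 : (M : ℝ) ≠ 0 := by positivity
  have hMpos : (0:ℝ) < M := by positivity
  constructor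
  · rintro ⟨hU, hbox⟩
    refine ⟨fun i => (fun k => a i (u i) k - (∑ j, a j (u j) k) / M,
                      fun k => (∑ j, a j (u j) k) / M - a i (u i) k), hU, ?_, ?_⟩
    · ext k <;>
      · simp only [Prod.fst_sum, Prod.snd_sum, Finset.sum_apply,
          Finset.sum_sub_distrib, Finset.sum_const, Finset.card_univ,
          Fintype.card_fin, nsmul_eq_mul, Prod.fst_zero, Prod.snd_zero,
          Pi.zero_apply]
        field_simp
        ring
    · intro i k
      have h1 := (hbox k).1
      have h2 := (hbox k).2
      constructor
      · have he : (vt k - vhi) / (M:ℝ) + a i (u i) k -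
            (a i (u i) k - (∑ j, a j (u j) k) / M) =
            (vt k - vhi + ∑ j, a j (u j) k) / M := by ring
        rw [he]
        exact div_nonpos_of_nonpos_of_nonneg (by linarith) (le_of_lt hMpos)
      · have he : (vlo - vt k) / (M:ℝ) - a i (u i) k -
            ((∑ j, a j (u j) k) / M - a i (u i) k) =
            (vlo - vt k - ∑ j, a j (u j) k) / M := by ring
        rw [he]
        exact div_nonpos_of_nonpos_of_nonneg (by linarith) (le_of_lt hMpos)
  · rintro ⟨s, hU, hsum, hg⟩
    refine ⟨hU, fun k => ?_⟩
    have hs1 : ∑ i, (s i).1 k = 0 := by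
      have := congrFun (congrArg Prod.fst hsum) k
      simpa [Prod.fst_sum, Finset.sum_apply] using this
    have hs2 : ∑ i, (s i).2 k = 0 := by
      have := congrFun (congrArg Prod.snd hsum) k
      simpa [Prod.snd_sum, Finset.sum_apply] using this
    have hMul : (M:ℝ) * ((vt k - vhi) / M) = vt k - vhi := by field_simp
    have hMul2 : (M:ℝ) * ((vlo - vt k) / M) = vlo - vt k := by field_simp
    constructor
    · have h := Finset.sum_le_sum (fun i (_ : i ∈ Finset.univ) => (hg i k).2)
      rw [Finset.sum_const] at h
      have hle : ∑ i, ((vlo - vt k) / (M:ℝ) - a i (u i) k - (s i).2 k) ≤ 0 := by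
        simpa using h
      rw [Finset.sum_sub_distrib, Finset.sum_sub_distrib, Finset.sum_const,
        Finset.card_univ, Fintype.card_fin, nsmul_eq_mul, hMul2, hs2] at hle
      linarith
    · have h := Finset.sum_le_sum (fun i (_ : i ∈ Finset.univ) => (hg i k).1)
      have hle : ∑ i, ((vt k - vhi) / (M:ℝ) + a i (u i) k - (s i).1 k) ≤ 0 := by
        simpa using h
      rw [Finset.sum_sub_distrib, Finset.sum_add_distrib, Finset.sum_const,
        Finset.card_univ, Fintype.card_fin, nsmul_eq_mul, hMul, hs1] at hle
      linarith

/-- The optimal values of (P1) and (P2) coincide: the infimum of the common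
objective `∑ᵢ f̃ᵢ(uᵢ)` over the feasible set of (P1) equals its infimum over
the feasible set of (P2); in particular (P1) is feasible iff (P2) is. -/
theorem optimal_values_equal
    (M N : ℕ) (hM : 1 ≤ M) (hN : 1 ≤ N) (d : Fin M → ℕ)
    (U : ∀ i : Fin M, Set (Fin (d i) → ℝ))
    (f : ∀ i : Fin M, (Fin (d i) → ℝ) → ℝ)
    (a : ∀ i : Fin M, (Fin (d i) → ℝ) →ₗ[ℝ] (Fin N → ℝ))
    (vt : Fin N → ℝ) (vlo vhi : ℝ) :
    sInf {y : ℝ | ∃ u, P1Feas M N d U a vt vlo vhi u ∧ y = ∑ i, f i (u i)} =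
      sInf {y : ℝ | ∃ u s, P2Feas M N d U a vt vlo vhi u s ∧
        y = ∑ i, f i (u i)} ∧
    ((∃ u, P1Feas M N d U a vt vlo vhi u) ↔
      (∃ u s, P2Feas M N d U a vt vlo vhi u s)) := by
  have hset : {y : ℝ | ∃ u, P1Feas M N d U a vt vlo vhi u ∧ y = ∑ i, f i (u i)}
      = {y : ℝ | ∃ u s, P2Feas M N d U a vt vlo vhi u s ∧ y = ∑ i, f i (u i)} := by
    ext y
    simp only [Set.mem_setOf_eq]
    constructor
    · rintro ⟨u, h, rfl⟩
      obtain ⟨s, hs⟩ := (feas_iff_aux M N hM d U a vt vlo vhi u).mp h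
      exact ⟨u, s, hs, rfl⟩
    · rintro ⟨u, s, h, rfl⟩
      exact ⟨u, (feas_iff_aux M N hM d U a vt vlo vhi u).mpr ⟨s, h⟩, rfl⟩
  refine ⟨by rw [hset], ?_⟩
  constructor
  · rintro ⟨u, h⟩
    obtain ⟨s, hs⟩ := (feas_iff_aux M N hM d U a vt vlo vhi u).mp h
    exact ⟨u, s, hs⟩
  · rintro ⟨u, s, h⟩
    exact ⟨u, (feas_iff_aux M N hM d U a vt vlo vhi u).mpr ⟨s, h⟩⟩
end
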